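/- Let η₁,…,ηₙ be i.i.d. random variables with P(ηᵢ = 1) = P(ηᵢ = −1) = 1/2. Then E( sup_{β ∈ ℝ^p : |β|₁ ≤ L} Σ_{i=1}^n ηᵢ (x_iβ)² ) ≤ L² (2Mn log(2p²))^{1/2}. -/

import Mathlib

open MeasureTheory ProbabilityTheory Real
open scoped NNReal

/-!
Expanding the square, `∑ᵢ ηᵢ (xᵢβ)² = ∑ⱼₖ βⱼ βₖ Yⱼₖ` with `Yⱼₖ = ∑ᵢ xᵢⱼ xᵢₖ ηᵢ`, so on the
`ℓ¹`-ball of radius `L` the supremum is at most `L² maxⱼₖ |Yⱼₖ|`. By Hoeffding's lemma and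
independence each `Yⱼₖ` is sub-Gaussian with variance proxy `∑ᵢ xᵢⱼ² xᵢₖ² ≤ nM`. For `N`
sub-Gaussian variables with proxy `c`, Jensen applied to `exp (t max |Y|) ≤ ∑ (e^{tY} + e^{-tY})`
gives `E max |Y| ≤ log (2N) / t + ct/2`, and optimizing in `t` yields `√(2c log (2N))`.
-/

lemma le_sqrt_of_forall_le_div_add {a A c : ℝ} (hA : 0 < A) (hc : 0 ≤ c)
    (h : ∀ t > 0, a ≤ A / t + c * t / 2) : a ≤ √(2 * c * A) := by
  set s := √(2 * c * A)
  have hs : 0 ≤ s := sqrt_nonneg _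
  have hs2 : s ^ 2 = 2 * c * A := sq_sqrt (by positivity)
  refine le_of_forall_pos_le_add fun ε hε => ?_
  -- `t = 2A / (s + ε)` is the optimal `t = √(2A/c)` with `s` perturbed so that `c = 0` is allowed.
  calc a ≤ A / (2 * A / (s + ε)) + c * (2 * A / (s + ε)) / 2 := h _ (by positivity)
    _ = (s + ε) / 2 + s ^ 2 / (2 * (s + ε)) := by rw [hs2]; field_simp
    _ ≤ s + ε := by
      have : s ^ 2 / (2 * (s + ε)) ≤ (s + ε) / 2 := by
        rw [div_le_iff₀ (by positivity)]; nlinarith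
      linarith

lemma sum_mul_sq_le_of_sum_pow_four_le {ι : Type*} (s : Finset ι) {u v : ι → ℝ} {K : ℝ}
    (hu : ∑ i ∈ s, u i ^ 4 ≤ K) (hv : ∑ i ∈ s, v i ^ 4 ≤ K) :
    ∑ i ∈ s, (u i * v i) ^ 2 ≤ K := by
  calc ∑ i ∈ s, (u i * v i) ^ 2 ≤ ∑ i ∈ s, (u i ^ 4 + v i ^ 4) / 2 :=
        Finset.sum_le_sum fun i _ => by nlinarith [sq_nonneg (u i ^ 2 - v i ^ 2)]
    _ = ((∑ i ∈ s, u i ^ 4) + ∑ i ∈ s, v i ^ 4) / 2 := by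
        rw [← Finset.sum_div, Finset.sum_add_distrib]
    _ ≤ K := by linarith

lemma sum_mul_sq_sum_mul_eq {ι κ : Type*} [Fintype ι] [Fintype κ] (η : ι → ℝ)
    (x : ι → κ → ℝ) (β : κ → ℝ) :
    ∑ i, η i * (∑ j, x i j * β j) ^ 2 = ∑ j, ∑ k, β j * β k * ∑ i, x i j * x i k * η i := by
  simp_rw [sq, Finset.sum_mul_sum, Finset.mul_sum]
  rw [Finset.sum_comm]
  refine Finset.sum_congr rfl fun j _ => ?_
  rw [Finset.sum_comm]
  exact Finset.sum_congr rfl fun k _ => Finset.sum_congr rfl fun i _ => by ring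

lemma sum_sum_mul_mul_le_sq_mul {κ : Type*} [Fintype κ] (β : κ → ℝ) (A : κ → κ → ℝ) {m : ℝ}
    (hA : ∀ j k, |A j k| ≤ m) :
    ∑ j, ∑ k, β j * β k * A j k ≤ (∑ j, |β j|) ^ 2 * m := by
  calc ∑ j, ∑ k, β j * β k * A j k ≤ ∑ j, ∑ k, |β j| * |β k| * m := by
        refine Finset.sum_le_sum fun j _ => Finset.sum_le_sum fun k _ => ?_
        calc β j * β k * A j k ≤ |β j * β k * A j k| := le_abs_self _
          _ = |β j| * |β k| * |A j k| := by rw [abs_mul, abs_mul]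
          _ ≤ |β j| * |β k| * m := by gcongr; exact hA j k
    _ = (∑ j, |β j|) ^ 2 * m := by
        rw [sq, Finset.sum_mul_sum, Finset.sum_mul]
        exact Finset.sum_congr rfl fun j _ => by rw [Finset.sum_mul]

lemma sum_mul_sq_le_sq_mul_iSup_abs {ι κ : Type*} [Fintype ι] [Fintype κ] (η : ι → ℝ)
    (x : ι → κ → ℝ) {β : κ → ℝ} {L : ℝ} (hβ : ∑ j, |β j| ≤ L) :
    ∑ i, η i * (∑ j, x i j * β j) ^ 2 ≤ L ^ 2 * ⨆ jk : κ × κ, |∑ i, x i jk.1 * x i jk.2 * η i| := by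
  set m := ⨆ jk : κ × κ, |∑ i, x i jk.1 * x i jk.2 * η i|
  rw [sum_mul_sq_sum_mul_eq]
  calc _ ≤ (∑ j, |β j|) ^ 2 * m := sum_sum_mul_mul_le_sq_mul _ _ fun j k =>
        le_ciSup (Finite.bddAbove_range fun jk : κ × κ => |∑ i, x i jk.1 * x i jk.2 * η i|) (j, k)
    _ ≤ L ^ 2 * m := by
        have : 0 ≤ m := Real.iSup_nonneg fun _ => abs_nonneg _
        gcongr

lemma exp_mul_iSup_abs_le_sum {κ : Type*} [Fintype κ] [Nonempty κ] (y : κ → ℝ) (t : ℝ) :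
    exp (t * ⨆ a, |y a|) ≤ ∑ a, (exp (t * y a) + exp (-t * y a)) := by
  obtain ⟨a, ha⟩ := exists_eq_ciSup_of_finite (f := fun a => |y a|)
  have hexp : exp (t * |y a|) ≤ exp (t * y a) + exp (-t * y a) := by
    rcases abs_cases (y a) with ⟨h, -⟩ | ⟨h, -⟩
    · rw [h]; linarith [exp_pos (-t * y a)]
    · rw [h, mul_neg, ← neg_mul]; linarith [exp_pos (t * y a)]
  rw [← ha]
  exact hexp.trans (Finset.single_le_sum (f := fun a => exp (t * y a) + exp (-t * y a))
    (fun b _ => by positivity) (Finset.mem_univ a))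

section Probability

variable {Ω : Type*} {mΩ : MeasurableSpace Ω} {μ : Measure Ω}

lemma ProbabilityTheory.HasSubgaussianMGF.mono {X : Ω → ℝ} {c d : ℝ≥0}
    (h : HasSubgaussianMGF X c μ) (hcd : c ≤ d) : HasSubgaussianMGF X d μ :=
  ⟨h.integrable_exp_mul, fun t => (h.mgf_le t).trans (exp_le_exp.2 (by gcongr))⟩

section Rademacher

variable [IsProbabilityMeasure μ] {Y : Ω → ℝ}

lemma ae_eq_one_or_eq_neg_one_of_measure_eq_half (hY : Measurable Y)
    (h₁ : μ {ω | Y ω = 1} = 1 / 2) (h₂ : μ {ω | Y ω = -1} = 1 / 2) :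
    ∀ᵐ ω ∂μ, Y ω = 1 ∨ Y ω = -1 := by
  have hA : MeasurableSet {ω | Y ω = 1} := hY (measurableSet_singleton 1)
  have hB : MeasurableSet {ω | Y ω = -1} := hY (measurableSet_singleton (-1))
  have hdisj : Disjoint {ω | Y ω = 1} {ω | Y ω = -1} :=
    Set.disjoint_left.2 fun ω (h : Y ω = 1) (h' : Y ω = -1) => by linarith
  change ∀ᵐ ω ∂μ, ω ∈ {ω | Y ω = 1} ∪ {ω | Y ω = -1}
  rw [ae_mem_iff_measure_eq (hA.union hB).nullMeasurableSet, measure_union hdisj hB, h₁, h₂,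
    measure_univ, ENNReal.add_halves]

lemma integral_eq_zero_of_measure_eq_half (hY : Measurable Y)
    (h₁ : μ {ω | Y ω = 1} = 1 / 2) (h₂ : μ {ω | Y ω = -1} = 1 / 2) : μ[Y] = 0 := by
  have hA : MeasurableSet {ω | Y ω = 1} := hY (measurableSet_singleton 1)
  have hB : MeasurableSet {ω | Y ω = -1} := hY (measurableSet_singleton (-1))
  have hY' : Y =ᵐ[μ] fun ω => {ω | Y ω = 1}.indicator 1 ω - {ω | Y ω = -1}.indicator 1 ω := by
    filter_upwards [ae_eq_one_or_eq_neg_one_of_measure_eq_half hY h₁ h₂] with ω h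
    rcases h with h | h <;> norm_num [Set.indicator_apply, h]
  rw [integral_congr_ae hY', integral_sub ((integrable_const 1).indicator hA)
    ((integrable_const 1).indicator hB), integral_indicator_one hA, integral_indicator_one hB,
    measureReal_def, measureReal_def, h₁, h₂, sub_self]

lemma hasSubgaussianMGF_one_of_measure_eq_half (hY : Measurable Y)
    (h₁ : μ {ω | Y ω = 1} = 1 / 2) (h₂ : μ {ω | Y ω = -1} = 1 / 2) :
    HasSubgaussianMGF Y 1 μ := by
  convert hasSubgaussianMGF_of_mem_Icc_of_integral_eq_zero (a := -1) (b := 1) hY.aemeasurable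
    ?_ (integral_eq_zero_of_measure_eq_half hY h₁ h₂)
  · ext; norm_num
  · filter_upwards [ae_eq_one_or_eq_neg_one_of_measure_eq_half hY h₁ h₂] with ω h
    rcases h with h | h <;> simp [h]

lemma hasSubgaussianMGF_sum_mul_of_measure_eq_half {ι : Type*} [Fintype ι] {η : ι → Ω → ℝ}
    (hmeas : ∀ i, Measurable (η i)) (hindep : iIndepFun η μ)
    (hdist : ∀ i, μ {ω | η i ω = 1} = 1 / 2 ∧ μ {ω | η i ω = -1} = 1 / 2) (a : ι → ℝ) :
    HasSubgaussianMGF (fun ω => ∑ i, a i * η i ω) (∑ i, ‖a i‖₊ ^ 2) μ := by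
  refine HasSubgaussianMGF.sum_of_iIndepFun
    (hindep.comp (fun i y => a i * y) fun i => measurable_const_mul _) fun i _ => ?_
  convert (hasSubgaussianMGF_one_of_measure_eq_half (hmeas i) (hdist i).1 (hdist i).2).const_mul
    (a i) using 1
  · rfl
  · ext
    simp only [NNReal.coe_pow, coe_nnnorm, norm_eq_abs, sq_abs]
    exact (mul_one _).symm

end Rademacher

section Maximal

variable {κ : Type*} [Fintype κ] [Nonempty κ] {Y : κ → Ω → ℝ}

lemma integrable_iSup_abs (hY : ∀ a, Integrable (Y a) μ) :
    Integrable (fun ω => ⨆ a, |Y a ω|) μ := by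
  refine (integrable_finsetSum Finset.univ fun a _ => (hY a).abs).mono'
    (AEMeasurable.iSup fun a => (hY a).aemeasurable.abs).aestronglyMeasurable
    (ae_of_all _ fun ω => ?_)
  rw [norm_of_nonneg (Real.iSup_nonneg fun a => abs_nonneg _)]
  exact ciSup_le fun a => Finset.single_le_sum (f := fun a => |Y a ω|)
    (fun b _ => abs_nonneg _) (Finset.mem_univ a)

variable [IsProbabilityMeasure μ] {c : ℝ≥0}

lemma integral_iSup_abs_le_log_div_add (hY : ∀ a, HasSubgaussianMGF (Y a) c μ) {t : ℝ}
    (ht : 0 < t) :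
    ∫ ω, ⨆ a, |Y a ω| ∂μ ≤ log (2 * Fintype.card κ) / t + c * t / 2 := by
  set W := fun ω => ⨆ a, |Y a ω|
  have hW : Integrable W μ := integrable_iSup_abs fun a => (hY a).integrable
  have hexpY : ∀ s a, Integrable (fun ω => exp (s * Y a ω)) μ :=
    fun s a => (hY a).integrable_exp_mul s
  have hterm : ∀ a, Integrable (fun ω => exp (t * Y a ω) + exp (-t * Y a ω)) μ :=
    fun a => (hexpY t a).add (hexpY (-t) a)
  have hsum : Integrable (fun ω => ∑ a, (exp (t * Y a ω) + exp (-t * Y a ω))) μ :=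
    integrable_finsetSum _ fun a _ => hterm a
  have hexpW : Integrable (fun ω => exp (t * W ω)) μ := by
    refine hsum.mono' (hW.aemeasurable.const_mul t).exp.aestronglyMeasurable
      (ae_of_all _ fun ω => ?_)
    rw [norm_of_nonneg (exp_pos _).le]
    exact exp_mul_iSup_abs_le_sum (fun a => Y a ω) t
  have hN : (0 : ℝ) < 2 * Fintype.card κ := by positivity
  have hbound : exp (t * ∫ ω, W ω ∂μ) ≤ 2 * Fintype.card κ * exp (c * t ^ 2 / 2) :=
    calc exp (t * ∫ ω, W ω ∂μ) ≤ ∫ ω, exp (t * W ω) ∂μ := by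
          rw [← integral_const_mul]
          exact convexOn_exp.map_integral_le continuousOn_exp isClosed_univ
            (ae_of_all _ fun _ => Set.mem_univ _) (hW.const_mul t) hexpW
      _ ≤ ∫ ω, ∑ a, (exp (t * Y a ω) + exp (-t * Y a ω)) ∂μ :=
          integral_mono hexpW hsum fun ω => exp_mul_iSup_abs_le_sum (fun a => Y a ω) t
      _ = ∑ a, (mgf (Y a) μ t + mgf (Y a) μ (-t)) := by
          rw [integral_finsetSum _ fun a _ => hterm a]
          exact Finset.sum_congr rfl fun a _ => integral_add (hexpY t a) (hexpY (-t) a)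
      _ ≤ ∑ _a : κ, (exp (c * t ^ 2 / 2) + exp (c * t ^ 2 / 2)) := by
          gcongr with a
          · exact (hY a).mgf_le t
          · simpa using (hY a).mgf_le (-t)
      _ = 2 * Fintype.card κ * exp (c * t ^ 2 / 2) := by
          rw [Finset.sum_const, Finset.card_univ, nsmul_eq_mul]; ring
  have hlog : t * ∫ ω, W ω ∂μ ≤ log (2 * Fintype.card κ) + c * t ^ 2 / 2 := by
    rwa [← log_exp (t * _), ← log_exp (c * t ^ 2 / 2), ← log_mul hN.ne' (exp_pos _).ne',
      log_le_log_iff (exp_pos _) (by positivity)]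
  rw [div_add' _ _ _ ht.ne', le_div_iff₀ ht]
  nlinarith

lemma integral_iSup_abs_le_sqrt (hY : ∀ a, HasSubgaussianMGF (Y a) c μ) :
    ∫ ω, ⨆ a, |Y a ω| ∂μ ≤ √(2 * c * log (2 * Fintype.card κ)) := by
  have hN : (1 : ℝ) < 2 * Fintype.card κ := by
    have : (1 : ℝ) ≤ Fintype.card κ := by exact_mod_cast Fintype.card_pos
    linarith
  exact le_sqrt_of_forall_le_div_add (log_pos hN) c.2 fun t ht =>
    integral_iSup_abs_le_log_div_add hY ht

end Maximal

end Probability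

/-- For i.i.d. Rademacher signs `η₁,…,ηₙ`,
`E sup_{|β|₁ ≤ L} Σ_i ηᵢ (x_iβ)² ≤ L² (2 M n log(2p²))^{1/2}`. -/
theorem stmt8 {Ω : Type*} [MeasureSpace Ω] [IsProbabilityMeasure (ℙ : Measure Ω)]
    (n p : ℕ) (hn : 0 < n) (hp : 0 < p)
    (x : Fin n → Fin p → ℝ)
    (M : ℝ) (hM : M = ⨆ j : Fin p, (1 / n : ℝ) * ∑ i, x i j ^ 4)
    (L : ℝ) (hL : 0 < L)
    (η : Fin n → Ω → ℝ)
    (hmeas : ∀ i, Measurable (η i))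
    (hindep : iIndepFun η ℙ)
    (hdist : ∀ i, ℙ {ω | η i ω = 1} = 1 / 2 ∧ ℙ {ω | η i ω = -1} = 1 / 2) :
    (∫ ω, ⨆ β : {b : Fin p → ℝ // ∑ j, |b j| ≤ L},
        ∑ i, η i ω * (∑ j, x i j * β.1 j) ^ 2 ∂ℙ)
      ≤ L ^ 2 * Real.sqrt (2 * M * n * Real.log (2 * (p : ℝ) ^ 2)) := by
  have : Nonempty (Fin p) := ⟨⟨0, hp⟩⟩
  have : Nonempty {b : Fin p → ℝ // ∑ j, |b j| ≤ L} := ⟨⟨0, by simpa using hL.le⟩⟩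
  have hcol : ∀ j, ∑ i, x i j ^ 4 ≤ n * M := fun j => by
    have := hM ▸ le_ciSup (Set.finite_range fun j => (1 / n : ℝ) * ∑ i, x i j ^ 4).bddAbove j
    rwa [one_div, inv_mul_le_iff₀ (by exact_mod_cast hn)] at this
  have hM0 : 0 ≤ M := hM ▸ Real.iSup_nonneg fun j => by positivity
  set Y : Fin p × Fin p → Ω → ℝ := fun jk ω => ∑ i, x i jk.1 * x i jk.2 * η i ω
  have hnM : 0 ≤ (n : ℝ) * M := by positivity
  have hY : ∀ jk, HasSubgaussianMGF (Y jk) (n * M).toNNReal ℙ := fun jk =>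
    (hasSubgaussianMGF_sum_mul_of_measure_eq_half hmeas hindep hdist _).mono <| by
      rw [Real.le_toNNReal_iff_coe_le hnM]
      push_cast
      simp only [Real.norm_eq_abs, sq_abs]
      exact sum_mul_sq_le_of_sum_pow_four_le _ (hcol jk.1) (hcol jk.2)
  set W := fun ω => ⨆ jk, |Y jk ω|
  have hbound : ∀ ω (β : {b : Fin p → ℝ // ∑ j, |b j| ≤ L}),
      ∑ i, η i ω * (∑ j, x i j * β.1 j) ^ 2 ≤ L ^ 2 * W ω :=
    fun ω β => sum_mul_sq_le_sq_mul_iSup_abs (fun i => η i ω) x β.2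
  have hsup_nonneg : ∀ ω, 0 ≤ ⨆ β : {b : Fin p → ℝ // ∑ j, |b j| ≤ L},
      ∑ i, η i ω * (∑ j, x i j * β.1 j) ^ 2 := fun ω =>
    le_ciSup_of_le ⟨L ^ 2 * W ω, Set.forall_mem_range.2 (hbound ω)⟩ ⟨0, by simpa using hL.le⟩
      (by simp)
  calc _ ≤ ∫ ω, L ^ 2 * W ω ∂ℙ := integral_mono_of_nonneg (ae_of_all _ hsup_nonneg)
        ((integrable_iSup_abs fun jk => (hY jk).integrable).const_mul _)
        (ae_of_all _ fun ω => ciSup_le (hbound ω))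
    _ = L ^ 2 * ∫ ω, W ω ∂ℙ := integral_const_mul _ _
    _ ≤ L ^ 2 * √(2 * (n * M).toNNReal * log (2 * Fintype.card (Fin p × Fin p))) := by
        gcongr; exact integral_iSup_abs_le_sqrt hY
    _ = L ^ 2 * √(2 * M * n * log (2 * (p : ℝ) ^ 2)) := by
        rw [Real.coe_toNNReal _ hnM, Fintype.card_prod, Fintype.card_fin]; push_cast; ring_nf
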